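/- For all real x with 0 < x < π/2, 3 + (1/60 − (1/280)x^2 − ρ·x^4)·x^3·tan x < 2·(x/sin x) + x/tan x < 3 + (1/60 − (1/280)x^2 − (83/100800)·x^4)·x^3·tan x, where ρ = (56 − 3π^2)/(210π^4). -/
import Mathlib
open Real Set

lemma nn_deriv (F F' : ℝ → ℝ) (hd : ∀ t, HasDerivAt F (F' t) t)
    (h0 : F 0 = 0) (hF' : ∀ t, 0 ≤ t → 0 ≤ F' t) {x : ℝ} (hx : 0 ≤ x) : 0 ≤ F x := by
  have hmono : MonotoneOn F (Set.Ici 0) :=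
    monotoneOn_of_deriv_nonneg (convex_Ici 0)
      (fun t _ => (hd t).continuousAt.continuousWithinAt)
      (fun t _ => (hd t).differentiableAt.differentiableWithinAt)
      (fun t ht => by
        rw [(hd t).deriv]
        exact hF' t (le_of_lt (by simpa using ht)))
  have h := hmono Set.self_mem_Ici (Set.mem_Ici.mpr hx) hx
  rw [h0] at h; exact h

lemma TS1 (x : ℝ) (hx : 0 ≤ x) : Real.sin x ≤ x := by
  have key : (0:ℝ) ≤ x - Real.sin x := by
    refine nn_deriv (fun u : ℝ => u - Real.sin u)
      (fun t : ℝ => 1 - Real.cos t) ?_ ?_ ?_ hx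
    · intro t
      exact (hasDerivAt_id' t).sub (Real.hasDerivAt_sin t)
    · norm_num
    · intro t ht
      show (0:ℝ) ≤ 1 - Real.cos t
      linarith [Real.cos_le_one t]
  linarith

lemma TC2 (x : ℝ) (hx : 0 ≤ x) : 1 - x^2/2 ≤ Real.cos x := by
  have key : (0:ℝ) ≤ Real.cos x - (1 - x^2/2) := by
    refine nn_deriv (fun u : ℝ => Real.cos u - (1 - u^2/2))
      (fun t : ℝ => -Real.sin t - (0 - ((2:ℕ):ℝ)*t^(2-1)/2)) ?_ ?_ ?_ hx
    · intro t
      exact (Real.hasDerivAt_cos t).sub ((hasDerivAt_const t (1:ℝ)).sub ((hasDerivAt_pow 2 t).div_const 2))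
    · norm_num
    · intro t ht
      have h := TS1 t ht
      show (0:ℝ) ≤ -Real.sin t - (0 - ((2:ℕ):ℝ)*t^(2-1)/2)
      push_cast
      norm_num
      linarith [h]
  linarith

lemma TS3 (x : ℝ) (hx : 0 ≤ x) : x - x^3/6 ≤ Real.sin x := by
  have key : (0:ℝ) ≤ Real.sin x - (x - x^3/6) := by
    refine nn_deriv (fun u : ℝ => Real.sin u - (u - u^3/6))
      (fun t : ℝ => Real.cos t - (1 - ((3:ℕ):ℝ)*t^(3-1)/6)) ?_ ?_ ?_ hx
    · intro t
      exact (Real.hasDerivAt_sin t).sub ((hasDerivAt_id' t).sub ((hasDerivAt_pow 3 t).div_const 6))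
    · norm_num
    · intro t ht
      have h := TC2 t ht
      show (0:ℝ) ≤ Real.cos t - (1 - ((3:ℕ):ℝ)*t^(3-1)/6)
      push_cast
      norm_num
      linarith [h]
  linarith

lemma TC4 (x : ℝ) (hx : 0 ≤ x) : Real.cos x ≤ 1 - x^2/2 + x^4/24 := by
  have key : (0:ℝ) ≤ 1 - x^2/2 + x^4/24 - Real.cos x := by
    refine nn_deriv (fun u : ℝ => 1 - u^2/2 + u^4/24 - Real.cos u)
      (fun t : ℝ => 0 - ((2:ℕ):ℝ)*t^(2-1)/2 + ((4:ℕ):ℝ)*t^(4-1)/24 - -Real.sin t) ?_ ?_ ?_ hx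
    · intro t
      exact (((hasDerivAt_const t (1:ℝ)).sub ((hasDerivAt_pow 2 t).div_const 2)).add ((hasDerivAt_pow 4 t).div_const 24)).sub (Real.hasDerivAt_cos t)
    · norm_num
    · intro t ht
      have h := TS3 t ht
      show (0:ℝ) ≤ 0 - ((2:ℕ):ℝ)*t^(2-1)/2 + ((4:ℕ):ℝ)*t^(4-1)/24 - -Real.sin t
      push_cast
      norm_num
      linarith [h]
  linarith

lemma TS5 (x : ℝ) (hx : 0 ≤ x) : Real.sin x ≤ x - x^3/6 + x^5/120 := by
  have key : (0:ℝ) ≤ x - x^3/6 + x^5/120 - Real.sin x := by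
    refine nn_deriv (fun u : ℝ => u - u^3/6 + u^5/120 - Real.sin u)
      (fun t : ℝ => 1 - ((3:ℕ):ℝ)*t^(3-1)/6 + ((5:ℕ):ℝ)*t^(5-1)/120 - Real.cos t) ?_ ?_ ?_ hx
    · intro t
      exact (((hasDerivAt_id' t).sub ((hasDerivAt_pow 3 t).div_const 6)).add ((hasDerivAt_pow 5 t).div_const 120)).sub (Real.hasDerivAt_sin t)
    · norm_num
    · intro t ht
      have h := TC4 t ht
      show (0:ℝ) ≤ 1 - ((3:ℕ):ℝ)*t^(3-1)/6 + ((5:ℕ):ℝ)*t^(5-1)/120 - Real.cos t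
      push_cast
      norm_num
      linarith [h]
  linarith

lemma TC6 (x : ℝ) (hx : 0 ≤ x) : 1 - x^2/2 + x^4/24 - x^6/720 ≤ Real.cos x := by
  have key : (0:ℝ) ≤ Real.cos x - (1 - x^2/2 + x^4/24 - x^6/720) := by
    refine nn_deriv (fun u : ℝ => Real.cos u - (1 - u^2/2 + u^4/24 - u^6/720))
      (fun t : ℝ => -Real.sin t - (0 - ((2:ℕ):ℝ)*t^(2-1)/2 + ((4:ℕ):ℝ)*t^(4-1)/24 - ((6:ℕ):ℝ)*t^(6-1)/720)) ?_ ?_ ?_ hx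
    · intro t
      exact (Real.hasDerivAt_cos t).sub ((((hasDerivAt_const t (1:ℝ)).sub ((hasDerivAt_pow 2 t).div_const 2)).add ((hasDerivAt_pow 4 t).div_const 24)).sub ((hasDerivAt_pow 6 t).div_const 720))
    · norm_num
    · intro t ht
      have h := TS5 t ht
      show (0:ℝ) ≤ -Real.sin t - (0 - ((2:ℕ):ℝ)*t^(2-1)/2 + ((4:ℕ):ℝ)*t^(4-1)/24 - ((6:ℕ):ℝ)*t^(6-1)/720)
      push_cast
      norm_num
      linarith [h]
  linarith

lemma TS7 (x : ℝ) (hx : 0 ≤ x) : x - x^3/6 + x^5/120 - x^7/5040 ≤ Real.sin x := by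
  have key : (0:ℝ) ≤ Real.sin x - (x - x^3/6 + x^5/120 - x^7/5040) := by
    refine nn_deriv (fun u : ℝ => Real.sin u - (u - u^3/6 + u^5/120 - u^7/5040))
      (fun t : ℝ => Real.cos t - (1 - ((3:ℕ):ℝ)*t^(3-1)/6 + ((5:ℕ):ℝ)*t^(5-1)/120 - ((7:ℕ):ℝ)*t^(7-1)/5040)) ?_ ?_ ?_ hx
    · intro t
      exact (Real.hasDerivAt_sin t).sub ((((hasDerivAt_id' t).sub ((hasDerivAt_pow 3 t).div_const 6)).add ((hasDerivAt_pow 5 t).div_const 120)).sub ((hasDerivAt_pow 7 t).div_const 5040))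
    · norm_num
    · intro t ht
      have h := TC6 t ht
      show (0:ℝ) ≤ Real.cos t - (1 - ((3:ℕ):ℝ)*t^(3-1)/6 + ((5:ℕ):ℝ)*t^(5-1)/120 - ((7:ℕ):ℝ)*t^(7-1)/5040)
      push_cast
      norm_num
      linarith [h]
  linarith

lemma TC8 (x : ℝ) (hx : 0 ≤ x) : Real.cos x ≤ 1 - x^2/2 + x^4/24 - x^6/720 + x^8/40320 := by
  have key : (0:ℝ) ≤ 1 - x^2/2 + x^4/24 - x^6/720 + x^8/40320 - Real.cos x := by
    refine nn_deriv (fun u : ℝ => 1 - u^2/2 + u^4/24 - u^6/720 + u^8/40320 - Real.cos u)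
      (fun t : ℝ => 0 - ((2:ℕ):ℝ)*t^(2-1)/2 + ((4:ℕ):ℝ)*t^(4-1)/24 - ((6:ℕ):ℝ)*t^(6-1)/720 + ((8:ℕ):ℝ)*t^(8-1)/40320 - -Real.sin t) ?_ ?_ ?_ hx
    · intro t
      exact (((((hasDerivAt_const t (1:ℝ)).sub ((hasDerivAt_pow 2 t).div_const 2)).add ((hasDerivAt_pow 4 t).div_const 24)).sub ((hasDerivAt_pow 6 t).div_const 720)).add ((hasDerivAt_pow 8 t).div_const 40320)).sub (Real.hasDerivAt_cos t)
    · norm_num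
    · intro t ht
      have h := TS7 t ht
      show (0:ℝ) ≤ 0 - ((2:ℕ):ℝ)*t^(2-1)/2 + ((4:ℕ):ℝ)*t^(4-1)/24 - ((6:ℕ):ℝ)*t^(6-1)/720 + ((8:ℕ):ℝ)*t^(8-1)/40320 - -Real.sin t
      push_cast
      norm_num
      linarith [h]
  linarith

lemma TS9 (x : ℝ) (hx : 0 ≤ x) : Real.sin x ≤ x - x^3/6 + x^5/120 - x^7/5040 + x^9/362880 := by
  have key : (0:ℝ) ≤ x - x^3/6 + x^5/120 - x^7/5040 + x^9/362880 - Real.sin x := by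
    refine nn_deriv (fun u : ℝ => u - u^3/6 + u^5/120 - u^7/5040 + u^9/362880 - Real.sin u)
      (fun t : ℝ => 1 - ((3:ℕ):ℝ)*t^(3-1)/6 + ((5:ℕ):ℝ)*t^(5-1)/120 - ((7:ℕ):ℝ)*t^(7-1)/5040 + ((9:ℕ):ℝ)*t^(9-1)/362880 - Real.cos t) ?_ ?_ ?_ hx
    · intro t
      exact (((((hasDerivAt_id' t).sub ((hasDerivAt_pow 3 t).div_const 6)).add ((hasDerivAt_pow 5 t).div_const 120)).sub ((hasDerivAt_pow 7 t).div_const 5040)).add ((hasDerivAt_pow 9 t).div_const 362880)).sub (Real.hasDerivAt_sin t)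
    · norm_num
    · intro t ht
      have h := TC8 t ht
      show (0:ℝ) ≤ 1 - ((3:ℕ):ℝ)*t^(3-1)/6 + ((5:ℕ):ℝ)*t^(5-1)/120 - ((7:ℕ):ℝ)*t^(7-1)/5040 + ((9:ℕ):ℝ)*t^(9-1)/362880 - Real.cos t
      push_cast
      norm_num
      linarith [h]
  linarith

lemma TC10 (x : ℝ) (hx : 0 ≤ x) : 1 - x^2/2 + x^4/24 - x^6/720 + x^8/40320 - x^10/3628800 ≤ Real.cos x := by
  have key : (0:ℝ) ≤ Real.cos x - (1 - x^2/2 + x^4/24 - x^6/720 + x^8/40320 - x^10/3628800) := by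
    refine nn_deriv (fun u : ℝ => Real.cos u - (1 - u^2/2 + u^4/24 - u^6/720 + u^8/40320 - u^10/3628800))
      (fun t : ℝ => -Real.sin t - (0 - ((2:ℕ):ℝ)*t^(2-1)/2 + ((4:ℕ):ℝ)*t^(4-1)/24 - ((6:ℕ):ℝ)*t^(6-1)/720 + ((8:ℕ):ℝ)*t^(8-1)/40320 - ((10:ℕ):ℝ)*t^(10-1)/3628800)) ?_ ?_ ?_ hx
    · intro t
      exact (Real.hasDerivAt_cos t).sub ((((((hasDerivAt_const t (1:ℝ)).sub ((hasDerivAt_pow 2 t).div_const 2)).add ((hasDerivAt_pow 4 t).div_const 24)).sub ((hasDerivAt_pow 6 t).div_const 720)).add ((hasDerivAt_pow 8 t).div_const 40320)).sub ((hasDerivAt_pow 10 t).div_const 3628800))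
    · norm_num
    · intro t ht
      have h := TS9 t ht
      show (0:ℝ) ≤ -Real.sin t - (0 - ((2:ℕ):ℝ)*t^(2-1)/2 + ((4:ℕ):ℝ)*t^(4-1)/24 - ((6:ℕ):ℝ)*t^(6-1)/720 + ((8:ℕ):ℝ)*t^(8-1)/40320 - ((10:ℕ):ℝ)*t^(10-1)/3628800)
      push_cast
      norm_num
      linarith [h]
  linarith

lemma TS11 (x : ℝ) (hx : 0 ≤ x) : x - x^3/6 + x^5/120 - x^7/5040 + x^9/362880 - x^11/39916800 ≤ Real.sin x := by
  have key : (0:ℝ) ≤ Real.sin x - (x - x^3/6 + x^5/120 - x^7/5040 + x^9/362880 - x^11/39916800) := by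
    refine nn_deriv (fun u : ℝ => Real.sin u - (u - u^3/6 + u^5/120 - u^7/5040 + u^9/362880 - u^11/39916800))
      (fun t : ℝ => Real.cos t - (1 - ((3:ℕ):ℝ)*t^(3-1)/6 + ((5:ℕ):ℝ)*t^(5-1)/120 - ((7:ℕ):ℝ)*t^(7-1)/5040 + ((9:ℕ):ℝ)*t^(9-1)/362880 - ((11:ℕ):ℝ)*t^(11-1)/39916800)) ?_ ?_ ?_ hx
    · intro t
      exact (Real.hasDerivAt_sin t).sub ((((((hasDerivAt_id' t).sub ((hasDerivAt_pow 3 t).div_const 6)).add ((hasDerivAt_pow 5 t).div_const 120)).sub ((hasDerivAt_pow 7 t).div_const 5040)).add ((hasDerivAt_pow 9 t).div_const 362880)).sub ((hasDerivAt_pow 11 t).div_const 39916800))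
    · norm_num
    · intro t ht
      have h := TC10 t ht
      show (0:ℝ) ≤ Real.cos t - (1 - ((3:ℕ):ℝ)*t^(3-1)/6 + ((5:ℕ):ℝ)*t^(5-1)/120 - ((7:ℕ):ℝ)*t^(7-1)/5040 + ((9:ℕ):ℝ)*t^(9-1)/362880 - ((11:ℕ):ℝ)*t^(11-1)/39916800)
      push_cast
      norm_num
      linarith [h]
  linarith

lemma TC12 (x : ℝ) (hx : 0 ≤ x) : Real.cos x ≤ 1 - x^2/2 + x^4/24 - x^6/720 + x^8/40320 - x^10/3628800 + x^12/479001600 := by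
  have key : (0:ℝ) ≤ 1 - x^2/2 + x^4/24 - x^6/720 + x^8/40320 - x^10/3628800 + x^12/479001600 - Real.cos x := by
    refine nn_deriv (fun u : ℝ => 1 - u^2/2 + u^4/24 - u^6/720 + u^8/40320 - u^10/3628800 + u^12/479001600 - Real.cos u)
      (fun t : ℝ => 0 - ((2:ℕ):ℝ)*t^(2-1)/2 + ((4:ℕ):ℝ)*t^(4-1)/24 - ((6:ℕ):ℝ)*t^(6-1)/720 + ((8:ℕ):ℝ)*t^(8-1)/40320 - ((10:ℕ):ℝ)*t^(10-1)/3628800 + ((12:ℕ):ℝ)*t^(12-1)/479001600 - -Real.sin t) ?_ ?_ ?_ hx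
    · intro t
      exact (((((((hasDerivAt_const t (1:ℝ)).sub ((hasDerivAt_pow 2 t).div_const 2)).add ((hasDerivAt_pow 4 t).div_const 24)).sub ((hasDerivAt_pow 6 t).div_const 720)).add ((hasDerivAt_pow 8 t).div_const 40320)).sub ((hasDerivAt_pow 10 t).div_const 3628800)).add ((hasDerivAt_pow 12 t).div_const 479001600)).sub (Real.hasDerivAt_cos t)
    · norm_num
    · intro t ht
      have h := TS11 t ht
      show (0:ℝ) ≤ 0 - ((2:ℕ):ℝ)*t^(2-1)/2 + ((4:ℕ):ℝ)*t^(4-1)/24 - ((6:ℕ):ℝ)*t^(6-1)/720 + ((8:ℕ):ℝ)*t^(8-1)/40320 - ((10:ℕ):ℝ)*t^(10-1)/3628800 + ((12:ℕ):ℝ)*t^(12-1)/479001600 - -Real.sin t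
      push_cast
      norm_num
      linarith [h]
  linarith

lemma TS13 (x : ℝ) (hx : 0 ≤ x) : Real.sin x ≤ x - x^3/6 + x^5/120 - x^7/5040 + x^9/362880 - x^11/39916800 + x^13/6227020800 := by
  have key : (0:ℝ) ≤ x - x^3/6 + x^5/120 - x^7/5040 + x^9/362880 - x^11/39916800 + x^13/6227020800 - Real.sin x := by
    refine nn_deriv (fun u : ℝ => u - u^3/6 + u^5/120 - u^7/5040 + u^9/362880 - u^11/39916800 + u^13/6227020800 - Real.sin u)
      (fun t : ℝ => 1 - ((3:ℕ):ℝ)*t^(3-1)/6 + ((5:ℕ):ℝ)*t^(5-1)/120 - ((7:ℕ):ℝ)*t^(7-1)/5040 + ((9:ℕ):ℝ)*t^(9-1)/362880 - ((11:ℕ):ℝ)*t^(11-1)/39916800 + ((13:ℕ):ℝ)*t^(13-1)/6227020800 - Real.cos t) ?_ ?_ ?_ hx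
    · intro t
      exact (((((((hasDerivAt_id' t).sub ((hasDerivAt_pow 3 t).div_const 6)).add ((hasDerivAt_pow 5 t).div_const 120)).sub ((hasDerivAt_pow 7 t).div_const 5040)).add ((hasDerivAt_pow 9 t).div_const 362880)).sub ((hasDerivAt_pow 11 t).div_const 39916800)).add ((hasDerivAt_pow 13 t).div_const 6227020800)).sub (Real.hasDerivAt_sin t)
    · norm_num
    · intro t ht
      have h := TC12 t ht
      show (0:ℝ) ≤ 1 - ((3:ℕ):ℝ)*t^(3-1)/6 + ((5:ℕ):ℝ)*t^(5-1)/120 - ((7:ℕ):ℝ)*t^(7-1)/5040 + ((9:ℕ):ℝ)*t^(9-1)/362880 - ((11:ℕ):ℝ)*t^(11-1)/39916800 + ((13:ℕ):ℝ)*t^(13-1)/6227020800 - Real.cos t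
      push_cast
      norm_num
      linarith [h]
  linarith

lemma TC14 (x : ℝ) (hx : 0 ≤ x) : 1 - x^2/2 + x^4/24 - x^6/720 + x^8/40320 - x^10/3628800 + x^12/479001600 - x^14/87178291200 ≤ Real.cos x := by
  have key : (0:ℝ) ≤ Real.cos x - (1 - x^2/2 + x^4/24 - x^6/720 + x^8/40320 - x^10/3628800 + x^12/479001600 - x^14/87178291200) := by
    refine nn_deriv (fun u : ℝ => Real.cos u - (1 - u^2/2 + u^4/24 - u^6/720 + u^8/40320 - u^10/3628800 + u^12/479001600 - u^14/87178291200))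
      (fun t : ℝ => -Real.sin t - (0 - ((2:ℕ):ℝ)*t^(2-1)/2 + ((4:ℕ):ℝ)*t^(4-1)/24 - ((6:ℕ):ℝ)*t^(6-1)/720 + ((8:ℕ):ℝ)*t^(8-1)/40320 - ((10:ℕ):ℝ)*t^(10-1)/3628800 + ((12:ℕ):ℝ)*t^(12-1)/479001600 - ((14:ℕ):ℝ)*t^(14-1)/87178291200)) ?_ ?_ ?_ hx
    · intro t
      exact (Real.hasDerivAt_cos t).sub ((((((((hasDerivAt_const t (1:ℝ)).sub ((hasDerivAt_pow 2 t).div_const 2)).add ((hasDerivAt_pow 4 t).div_const 24)).sub ((hasDerivAt_pow 6 t).div_const 720)).add ((hasDerivAt_pow 8 t).div_const 40320)).sub ((hasDerivAt_pow 10 t).div_const 3628800)).add ((hasDerivAt_pow 12 t).div_const 479001600)).sub ((hasDerivAt_pow 14 t).div_const 87178291200))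
    · norm_num
    · intro t ht
      have h := TS13 t ht
      show (0:ℝ) ≤ -Real.sin t - (0 - ((2:ℕ):ℝ)*t^(2-1)/2 + ((4:ℕ):ℝ)*t^(4-1)/24 - ((6:ℕ):ℝ)*t^(6-1)/720 + ((8:ℕ):ℝ)*t^(8-1)/40320 - ((10:ℕ):ℝ)*t^(10-1)/3628800 + ((12:ℕ):ℝ)*t^(12-1)/479001600 - ((14:ℕ):ℝ)*t^(14-1)/87178291200)
      push_cast
      norm_num
      linarith [h]
  linarith


set_option maxHeartbeats 2000000 in
theorem stmt_19 (x : ℝ) (h1 : 0 < x) (h2 : x < π / 2) :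
    3 + (1 / 60 - (1 / 280) * x ^ 2 - ((56 - 3 * π ^ 2) / (210 * π ^ 4)) * x ^ 4) * x ^ 3 * tan x <
      2 * (x / sin x) + x / tan x ∧
    2 * (x / sin x) + x / tan x <
      3 + (1 / 60 - (1 / 280) * x ^ 2 - (83 / 100800) * x ^ 4) * x ^ 3 * tan x := by
  have hpiL : (3.141592:ℝ) < π := pi_gt_d6
  have hpiU : π < 3.141593 := pi_lt_d6
  have hpi0 : (0:ℝ) < π := pi_pos
  have hs : 0 < Real.sin x := sin_pos_of_pos_of_lt_pi h1 (by linarith)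
  have hc : 0 < Real.cos x := cos_pos_of_mem_Ioo ⟨by linarith, h2⟩
  have hs' : Real.sin x ≠ 0 := ne_of_gt hs
  have hc' : Real.cos x ≠ 0 := ne_of_gt hc
  have hxn : (0:ℝ) ≤ x := le_of_lt h1
  have hx2 : x < 3141593/2000000 := by
    have : π/2 < 3141593/2000000 := by norm_num at hpiU ⊢; linarith
    linarith
  have pb : ∀ n : ℕ, x^n ≤ (3141593/2000000:ℝ)^n := fun n => pow_le_pow_left₀ hxn (le_of_lt hx2) n
  have pn : ∀ n : ℕ, (0:ℝ) ≤ x^n := fun n => pow_nonneg hxn n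
  set R : ℝ := (56 - 3 * π ^ 2) / (210 * π ^ 4) with hRdef
  have hpi2 : π^2 < (3.141593:ℝ)^2 := by nlinarith
  have hpi2' : (3.141592:ℝ)^2 < π^2 := by nlinarith
  have hpi4 : π^4 < (3.141593:ℝ)^4 := by nlinarith
  have hpi4' : (3.141592:ℝ)^4 < π^4 := by nlinarith
  have hR1 : (129014/100000000:ℝ) < R := by
    rw [hRdef, lt_div_iff₀ (by positivity)]
    norm_num at hpi2 hpi4 ⊢
    nlinarith
  have hR2 : R < (129016/100000000:ℝ) := by
    rw [hRdef, div_lt_iff₀ (by positivity)]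
    norm_num at hpi2' hpi4' ⊢
    nlinarith
  have hS : 1/(15*π^2) < (67549/10000000:ℝ) := by
    rw [div_lt_iff₀ (by positivity)]
    norm_num at hpi2' ⊢
    nlinarith
  have hS0 : (0:ℝ) < 1/(15*π^2) := by positivity
  have t_s9 := TS9 x hxn
  have t_s11 := TS11 x hxn
  have t_s13 := TS13 x hxn
  have t_c12 := TC12 x hxn
  have t_c14 := TC14 x hxn
  have hxc14 : x*(1 - x^2/2 + x^4/24 - x^6/720 + x^8/40320 - x^10/3628800 + x^12/479001600 - x^14/87178291200) ≤ x*Real.cos x := mul_le_mul_of_nonneg_left t_c14 hxn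
  have hxc12 : x*Real.cos x ≤ x*(1 - x^2/2 + x^4/24 - x^6/720 + x^8/40320 - x^10/3628800 + x^12/479001600) := mul_le_mul_of_nonneg_left t_c12 hxn
  have hVloV : (2*x + x*(1 - x^2/2 + x^4/24 - x^6/720 + x^8/40320 - x^10/3628800 + x^12/479001600 - x^14/87178291200) - 3*(x - x^3/6 + x^5/120 - x^7/5040 + x^9/362880 - x^11/39916800 + x^13/6227020800)) ≤ (2*x + x*Real.cos x - 3*Real.sin x) := by linarith
  have hVhiV : (2*x + x*Real.cos x - 3*Real.sin x) ≤ (2*x + x*(1 - x^2/2 + x^4/24 - x^6/720 + x^8/40320 - x^10/3628800 + x^12/479001600) - 3*(x - x^3/6 + x^5/120 - x^7/5040 + x^9/362880 - x^11/39916800)) := by linarith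
  have hW : (0:ℝ) < (1/60) + (-1/1260)*x^2 + (1/60480)*x^4 + (-1/4989600)*x^6 + (1/622702080)*x^8 + (-1/87178291200)*x^10 := by linarith [pb 2, pn 4, pb 6, pn 8, pb 10]
  have eW : (2*x + x*(1 - x^2/2 + x^4/24 - x^6/720 + x^8/40320 - x^10/3628800 + x^12/479001600 - x^14/87178291200) - 3*(x - x^3/6 + x^5/120 - x^7/5040 + x^9/362880 - x^11/39916800 + x^13/6227020800)) = x^5*((1/60) + (-1/1260)*x^2 + (1/60480)*x^4 + (-1/4989600)*x^6 + (1/622702080)*x^8 + (-1/87178291200)*x^10) := by ring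
  have hVlo0 : (0:ℝ) < (2*x + x*(1 - x^2/2 + x^4/24 - x^6/720 + x^8/40320 - x^10/3628800 + x^12/479001600 - x^14/87178291200) - 3*(x - x^3/6 + x^5/120 - x^7/5040 + x^9/362880 - x^11/39916800 + x^13/6227020800)) := by rw [eW]; exact mul_pos (pow_pos h1 5) hW
  have hV0 : (0:ℝ) < (2*x + x*Real.cos x - 3*Real.sin x) := lt_of_lt_of_le hVlo0 hVloV
  constructor
  · -- lower bound
    have key : (1/60 - 1/280*x^2 - R*x^4)*(x^3*Real.sin x^2) < Real.cos x*(2*x + x*Real.cos x - 3*Real.sin x) := by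
      rcases le_or_gt x (5/4) with hx54 | hx54
      · have pb54 : ∀ n : ℕ, x^n ≤ (5/4:ℝ)^n := fun n => pow_le_pow_left₀ hxn hx54 n
        have hsq13 : Real.sin x^2 ≤ (x - x^3/6 + x^5/120 - x^7/5040 + x^9/362880 - x^11/39916800 + x^13/6227020800)^2 := pow_le_pow_left₀ (le_of_lt hs) t_s13 2
        have hRx4 : (0:ℝ) ≤ (R - 129014/100000000)*x^4 := mul_nonneg (by linarith) (pn 4)
        have ePle : (1/60 - 1/280*x^2 - (129014/100000000)*x^4) - (1/60 - 1/280*x^2 - R*x^4) = (R - 129014/100000000)*x^4 := by ring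
        have hPle : (1/60 - 1/280*x^2 - R*x^4) ≤ (1/60 - 1/280*x^2 - (129014/100000000)*x^4) := by linarith [hRx4, ePle]
        have hPRL0 : (0:ℝ) ≤ (1/60 - 1/280*x^2 - (129014/100000000)*x^4) := by linarith [pb54 2, pb54 4]
        have hA : (1/60 - 1/280*x^2 - R*x^4)*(x^3*Real.sin x^2) ≤ (1/60 - 1/280*x^2 - (129014/100000000)*x^4)*(x^3*(x - x^3/6 + x^5/120 - x^7/5040 + x^9/362880 - x^11/39916800 + x^13/6227020800)^2) :=
          mul_le_mul hPle (mul_le_mul_of_nonneg_left hsq13 (pn 3))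
            (mul_nonneg (pn 3) (sq_nonneg _)) hPRL0
        have hCV : (1 - x^2/2 + x^4/24 - x^6/720 + x^8/40320 - x^10/3628800 + x^12/479001600 - x^14/87178291200)*(2*x + x*(1 - x^2/2 + x^4/24 - x^6/720 + x^8/40320 - x^10/3628800 + x^12/479001600 - x^14/87178291200) - 3*(x - x^3/6 + x^5/120 - x^7/5040 + x^9/362880 - x^11/39916800 + x^13/6227020800)) ≤ Real.cos x*(2*x + x*Real.cos x - 3*Real.sin x) :=
          mul_le_mul t_c14 hVloV (le_of_lt hVlo0) (le_of_lt hc)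
        have hrl : (0:ℝ) < (1470191/3150000000) + (-1576463/5568750000)*x^2 + (78250227959/1702701000000000)*x^4 + (-73085188697/20432412000000000)*x^6 + (67920985439/408648240000000000)*x^8 + (-44353862893/8581613040000000000)*x^10 + (71341326137/617876138880000000000)*x^12 + (-264301121563/135932750553600000000000)*x^14 + (82665726953/3262386013286400000000000)*x^16 + (-150121001/589041919065600000000000)*x^18 + (17122881907/8906313816271872000000000000)*x^20 + (-17454161/1696440726908928000000000000)*x^22 + (64507/1938789402181632000000000000)*x^24 := by linarith [pb54 2, pn 4, pb54 6, pn 8, pb54 10, pn 12, pb54 14, pn 16, pb54 18, pn 20, pb54 22, pn 24]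
        have eRL : (1 - x^2/2 + x^4/24 - x^6/720 + x^8/40320 - x^10/3628800 + x^12/479001600 - x^14/87178291200)*(2*x + x*(1 - x^2/2 + x^4/24 - x^6/720 + x^8/40320 - x^10/3628800 + x^12/479001600 - x^14/87178291200) - 3*(x - x^3/6 + x^5/120 - x^7/5040 + x^9/362880 - x^11/39916800 + x^13/6227020800)) - (1/60 - 1/280*x^2 - (129014/100000000)*x^4)*(x^3*(x - x^3/6 + x^5/120 - x^7/5040 + x^9/362880 - x^11/39916800 + x^13/6227020800)^2) = x^9*((1470191/3150000000) + (-1576463/5568750000)*x^2 + (78250227959/1702701000000000)*x^4 + (-73085188697/20432412000000000)*x^6 + (67920985439/408648240000000000)*x^8 + (-44353862893/8581613040000000000)*x^10 + (71341326137/617876138880000000000)*x^12 + (-264301121563/135932750553600000000000)*x^14 + (82665726953/3262386013286400000000000)*x^16 + (-150121001/589041919065600000000000)*x^18 + (17122881907/8906313816271872000000000000)*x^20 + (-17454161/1696440726908928000000000000)*x^22 + (64507/1938789402181632000000000000)*x^24) := by ring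
        have h9 : (0:ℝ) < x^9*((1470191/3150000000) + (-1576463/5568750000)*x^2 + (78250227959/1702701000000000)*x^4 + (-73085188697/20432412000000000)*x^6 + (67920985439/408648240000000000)*x^8 + (-44353862893/8581613040000000000)*x^10 + (71341326137/617876138880000000000)*x^12 + (-264301121563/135932750553600000000000)*x^14 + (82665726953/3262386013286400000000000)*x^16 + (-150121001/589041919065600000000000)*x^18 + (17122881907/8906313816271872000000000000)*x^20 + (-17454161/1696440726908928000000000000)*x^22 + (64507/1938789402181632000000000000)*x^24) := mul_pos (pow_pos h1 9) hrl
        linarith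
      · have hu : 0 < π/2 - x := by linarith
        have htan : π/2 - x < Real.tan (π/2 - x) := lt_tan hu (by linarith)
        have htan_eq : Real.tan (π/2 - x) = Real.cos x/Real.sin x := by
          rw [Real.tan_pi_div_two_sub, Real.tan_eq_sin_div_cos, inv_div]
        have hcx : (π/2 - x)*Real.sin x < Real.cos x := by
          rw [htan_eq] at htan
          exact (lt_div_iff₀ hs).mp htan
        have hid : (1/60 - 1/280*x^2 - R*x^4) = (π^2/4 - x^2)*(R*x^2 + 1/(15*π^2)) := by
          rw [hRdef]
          field_simp
          ring
        have hsplit : (1/60 - 1/280*x^2 - R*x^4)*(x^3*Real.sin x^2) = ((π/2 - x)*Real.sin x)*((π/2 + x)*((R*x^2 + 1/(15*π^2))*(x^3*Real.sin x))) := by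
          rw [hid]; ring
        have f2 : R*x^2 + 1/(15*π^2) ≤ 129016/100000000*x^2 + 67549/10000000 := by
          have h0 : (0:ℝ) ≤ (129016/100000000 - R)*x^2 := mul_nonneg (by linarith) (pn 2)
          have e0 : (129016/100000000 - R)*x^2 = 129016/100000000*x^2 - R*x^2 := by ring
          linarith [h0, e0]
        have f2n : (0:ℝ) ≤ R*x^2 + 1/(15*π^2) := by
          have : (0:ℝ) ≤ R*x^2 := mul_nonneg (by linarith) (pn 2)
          linarith
        have f4 : x^3*Real.sin x ≤ x^3*(x - x^3/6 + x^5/120 - x^7/5040 + x^9/362880) := mul_le_mul_of_nonneg_left t_s9 (pn 3)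
        have f24 : (R*x^2 + 1/(15*π^2))*(x^3*Real.sin x) ≤ (129016/100000000*x^2 + 67549/10000000)*(x^3*(x - x^3/6 + x^5/120 - x^7/5040 + x^9/362880)) :=
          mul_le_mul f2 f4 (mul_nonneg (pn 3) (le_of_lt hs)) (by linarith [pn 2])
        have hT : ((π/2 + x)*((R*x^2 + 1/(15*π^2))*(x^3*Real.sin x))) ≤ ((3141593/2000000 + x)*((129016/100000000*x^2 + 67549/10000000)*(x^3*(x - x^3/6 + x^5/120 - x^7/5040 + x^9/362880)))) :=
          mul_le_mul (by linarith) f24 (mul_nonneg f2n (mul_nonneg (pn 3) (le_of_lt hs))) (by linarith)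
        have qb : ∀ n : ℕ, (x - 5/4)^n ≤ (641593/2000000:ℝ)^n :=
          fun n => pow_le_pow_left₀ (by linarith) (by linarith) n
        have qn : ∀ n : ℕ, (0:ℝ) ≤ (x - 5/4)^n := fun n => pow_nonneg (by linarith) n
        have eQ : (2*x + x*(1 - x^2/2 + x^4/24 - x^6/720 + x^8/40320 - x^10/3628800 + x^12/479001600 - x^14/87178291200) - 3*(x - x^3/6 + x^5/120 - x^7/5040 + x^9/362880 - x^11/39916800 + x^13/6227020800)) - ((3141593/2000000 + x)*((129016/100000000*x^2 + 67549/10000000)*(x^3*(x - x^3/6 + x^5/120 - x^7/5040 + x^9/362880)))) = (57133802399908520664101/42548626093768704000000000) + (7228951828990805729937757/292521804394659840000000000)*(x - 5/4) + (229567646490109813926751/3165820393881600000000000)*(x - 5/4)^2 + (25654340065954094192279/279038656512000000000000)*(x - 5/4)^3 + (116786166360837982115123/1793819934720000000000000)*(x - 5/4)^4 + (1544847138687112882957/47563407360000000000000)*(x - 5/4)^5 + (658902477218905169651/50960793600000000000000)*(x - 5/4)^6 + (12606786224924912183/5202247680000000000000)*(x - 5/4)^7 + (-12137945884429170089/17340825600000000000000)*(x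 - 5/4)^8 + (-200855325545790337/557383680000000000000)*(x - 5/4)^9 + (-148651398290171237/6967296000000000000000)*(x - 5/4)^10 + (38360292525553/4147200000000000000)*(x - 5/4)^11 + (466887043325677/1596672000000000000000)*(x - 5/4)^12 + (-8975323192129/20217600000000000000)*(x - 5/4)^13 + (-658035522281311/9081072000000000000000)*(x - 5/4)^14 + (-48585631/13621608000000000)*(x - 5/4)^15 := by ring
        have hQ : ((3141593/2000000 + x)*((129016/100000000*x^2 + 67549/10000000)*(x^3*(x - x^3/6 + x^5/120 - x^7/5040 + x^9/362880)))) < (2*x + x*(1 - x^2/2 + x^4/24 - x^6/720 + x^8/40320 - x^10/3628800 + x^12/479001600 - x^14/87178291200) - 3*(x - x^3/6 + x^5/120 - x^7/5040 + x^9/362880 - x^11/39916800 + x^13/6227020800)) := by linarith [qn 1, qn 2, qn 3, qn 4, qn 5, qn 6, qn 7, qb 8, qb 9, qb 10, qn 11, qn 12, qb 13, qb 14, qb 15]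
        have m1 : ((π/2 - x)*Real.sin x)*((π/2 + x)*((R*x^2 + 1/(15*π^2))*(x^3*Real.sin x))) ≤ ((π/2 - x)*Real.sin x)*((3141593/2000000 + x)*((129016/100000000*x^2 + 67549/10000000)*(x^3*(x - x^3/6 + x^5/120 - x^7/5040 + x^9/362880)))) :=
          mul_le_mul_of_nonneg_left hT (mul_nonneg (le_of_lt hu) (le_of_lt hs))
        have m2 : ((π/2 - x)*Real.sin x)*((3141593/2000000 + x)*((129016/100000000*x^2 + 67549/10000000)*(x^3*(x - x^3/6 + x^5/120 - x^7/5040 + x^9/362880)))) < ((π/2 - x)*Real.sin x)*(2*x + x*(1 - x^2/2 + x^4/24 - x^6/720 + x^8/40320 - x^10/3628800 + x^12/479001600 - x^14/87178291200) - 3*(x - x^3/6 + x^5/120 - x^7/5040 + x^9/362880 - x^11/39916800 + x^13/6227020800)) :=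
          mul_lt_mul_of_pos_left hQ (mul_pos hu hs)
        have m3 : ((π/2 - x)*Real.sin x)*(2*x + x*(1 - x^2/2 + x^4/24 - x^6/720 + x^8/40320 - x^10/3628800 + x^12/479001600 - x^14/87178291200) - 3*(x - x^3/6 + x^5/120 - x^7/5040 + x^9/362880 - x^11/39916800 + x^13/6227020800)) ≤ ((π/2 - x)*Real.sin x)*(2*x + x*Real.cos x - 3*Real.sin x) :=
          mul_le_mul_of_nonneg_left hVloV (mul_nonneg (le_of_lt hu) (le_of_lt hs))
        have m4 : ((π/2 - x)*Real.sin x)*(2*x + x*Real.cos x - 3*Real.sin x) < Real.cos x*(2*x + x*Real.cos x - 3*Real.sin x) :=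
          mul_lt_mul_of_pos_right hcx hV0
        linarith
    have expandL : (2*(x/Real.sin x) + x/Real.tan x) - (3 + (1/60 - 1/280*x^2 - R*x^4)*x^3*Real.tan x)
        = (Real.cos x*(2*x + x*Real.cos x - 3*Real.sin x) - (1/60 - 1/280*x^2 - R*x^4)*(x^3*Real.sin x^2))/(Real.sin x*Real.cos x) := by
      rw [Real.tan_eq_sin_div_cos]
      field_simp
      ring
    have hd2 : 0 < (2*(x/Real.sin x) + x/Real.tan x) - (3 + (1/60 - 1/280*x^2 - R*x^4)*x^3*Real.tan x) := by
      rw [expandL]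
      exact div_pos (by linarith) (mul_pos hs hc)
    have hgoal : (1 / 60 - 1 / 280 * x ^ 2 - R * x ^ 4) * x ^ 3 * Real.tan x = (1/60 - 1/280*x^2 - R*x^4)*x^3*Real.tan x := by ring
    linarith [hd2, hgoal]
  · -- upper bound
    have hsloin : (0:ℝ) < (1) + (-1/6)*x^2 + (1/120)*x^4 + (-1/5040)*x^6 + (1/362880)*x^8 + (-1/39916800)*x^10 := by linarith [pb 2, pn 4, pb 6, pn 8, pb 10]
    have eSLO : (x - x^3/6 + x^5/120 - x^7/5040 + x^9/362880 - x^11/39916800) = x*((1) + (-1/6)*x^2 + (1/120)*x^4 + (-1/5040)*x^6 + (1/362880)*x^8 + (-1/39916800)*x^10) := by ring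
    have hslo0 : (0:ℝ) < (x - x^3/6 + x^5/120 - x^7/5040 + x^9/362880 - x^11/39916800) := by rw [eSLO]; exact mul_pos h1 hsloin
    have hsq11 : (x - x^3/6 + x^5/120 - x^7/5040 + x^9/362880 - x^11/39916800)^2 ≤ Real.sin x^2 := pow_le_pow_left₀ (le_of_lt hslo0) t_s11 2
    have hPu0 : (0:ℝ) ≤ (1/60 - 1/280*x^2 - (83/100800)*x^4) := by linarith [pb 2, pb 4]
    have hA : (1/60 - 1/280*x^2 - (83/100800)*x^4)*(x^3*(x - x^3/6 + x^5/120 - x^7/5040 + x^9/362880 - x^11/39916800)^2) ≤ (1/60 - 1/280*x^2 - (83/100800)*x^4)*(x^3*Real.sin x^2) :=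
      mul_le_mul_of_nonneg_left (mul_le_mul_of_nonneg_left hsq11 (pn 3)) hPu0
    have hchi0 : (0:ℝ) ≤ (1 - x^2/2 + x^4/24 - x^6/720 + x^8/40320 - x^10/3628800 + x^12/479001600) := le_trans (le_of_lt hc) t_c12
    have hCV : Real.cos x*(2*x + x*Real.cos x - 3*Real.sin x) ≤ (1 - x^2/2 + x^4/24 - x^6/720 + x^8/40320 - x^10/3628800 + x^12/479001600)*(2*x + x*(1 - x^2/2 + x^4/24 - x^6/720 + x^8/40320 - x^10/3628800 + x^12/479001600) - 3*(x - x^3/6 + x^5/120 - x^7/5040 + x^9/362880 - x^11/39916800)) :=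
      mul_le_mul t_c12 hVhiV (le_of_lt hV0) hchi0
    have hru : (0:ℝ) < (509/3991680) + (-422707/16765056000)*x^2 + (42157/20118067200)*x^4 + (-9179/91445760000)*x^6 + (134137/42247941120000)*x^8 + (-435367/6083703521280000)*x^10 + (789871/669207387340800000)*x^12 + (-691/49570917580800000)*x^14 + (179/1606097729617920000)*x^16 + (-83/160609772961792000000)*x^18 := by linarith [pb 2, pn 4, pb 6, pn 8, pb 10, pn 12, pb 14, pn 16, pb 18]
    have eRU : (1/60 - 1/280*x^2 - (83/100800)*x^4)*(x^3*(x - x^3/6 + x^5/120 - x^7/5040 + x^9/362880 - x^11/39916800)^2) - (1 - x^2/2 + x^4/24 - x^6/720 + x^8/40320 - x^10/3628800 + x^12/479001600)*(2*x + x*(1 - x^2/2 + x^4/24 - x^6/720 + x^8/40320 - x^10/3628800 + x^12/479001600) - 3*(x - x^3/6 + x^5/120 - x^7/5040 + x^9/362880 - x^11/39916800)) = x^11*((509/3991680) + (-422707/16765056000)*x^2 + (42157/20118067200)*x^4 + (-9179/91445760000)*x^6 + (134137/42247941120000)*x^8 + (-435367/6083703521280000)*x^10 + (789871/669207387340800000)*x^12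 + (-691/49570917580800000)*x^14 + (179/1606097729617920000)*x^16 + (-83/160609772961792000000)*x^18) := by ring
    have h11 : (0:ℝ) < x^11*((509/3991680) + (-422707/16765056000)*x^2 + (42157/20118067200)*x^4 + (-9179/91445760000)*x^6 + (134137/42247941120000)*x^8 + (-435367/6083703521280000)*x^10 + (789871/669207387340800000)*x^12 + (-691/49570917580800000)*x^14 + (179/1606097729617920000)*x^16 + (-83/160609772961792000000)*x^18) := mul_pos (pow_pos h1 11) hru
    have key : Real.cos x*(2*x + x*Real.cos x - 3*Real.sin x) < (1/60 - 1/280*x^2 - (83/100800)*x^4)*(x^3*Real.sin x^2) := by linarith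
    have expandU : (3 + (1/60 - 1/280*x^2 - (83/100800)*x^4)*x^3*Real.tan x) - (2*(x/Real.sin x) + x/Real.tan x)
        = ((1/60 - 1/280*x^2 - (83/100800)*x^4)*(x^3*Real.sin x^2) - Real.cos x*(2*x + x*Real.cos x - 3*Real.sin x))/(Real.sin x*Real.cos x) := by
      rw [Real.tan_eq_sin_div_cos]
      field_simp
      ring
    have hd2 : 0 < (3 + (1/60 - 1/280*x^2 - (83/100800)*x^4)*x^3*Real.tan x) - (2*(x/Real.sin x) + x/Real.tan x) := by
      rw [expandU]
      exact div_pos (by linarith) (mul_pos hs hc)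
    have hgoal : (1 / 60 - 1 / 280 * x ^ 2 - 83 / 100800 * x ^ 4) * x ^ 3 * Real.tan x = (1/60 - 1/280*x^2 - (83/100800)*x^4)*x^3*Real.tan x := by ring
    linarith [hd2, hgoal]
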